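/- Let S be a graded set (e.g., of connected components of nested sublevel sets) and let M = ⊕_n H^0(S_n; F_2) be the associated graded F_2[U]-module, where U acts by the restriction maps H^0(S_n) → H^0(S_{n-1}) induced by inclusions S_{n-1} ⊆ S_n. Suppose an involution J acts compatibly on all S_n, such that each S_n has at most one J-invariant connected component, and if S_n has a J-invariant component then so does S_{n+1}. Then the homology ker(1+J)/im(1+J) of M, as a graded F_2[U]-module, is isomorphic to F_2[U^{-1},U]/U·F_2[U] shifted to have bottom grading 2N (where 2N is the minimal grading containing a J-invariant component), or is zero if no J-invariant component exists. -/
import Mathlib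

private lemma zmod2_cases : ∀ c : ZMod 2, c = 0 ∨ c = 1 := by decide

private lemma zmod2_add_self (a : ZMod 2) : a + a = 0 := by revert a; decide

private lemma zmod2_add_eq_zero {a b : ZMod 2} : a + b = 0 ↔ b = a := by revert a b; decide

private lemma decomp_aux {C : Type*} [Fintype C] [DecidableEq C]
    (J : C → C) (hJ : ∀ x, J (J x) = x) (f : C → ZMod 2) (hf : ∀ x, f (J x) = f x) :
    ∃ g : C → ZMod 2, ∀ x, g x + g (J x) = if J x = x then 0 else f x := by
  classical
  let e := Fintype.equivFin C
  refine ⟨fun x => if e x < e (J x) then f x else 0, fun x => ?_⟩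
  by_cases hx : J x = x
  · simp [hx]
  · have hne : e x ≠ e (J x) := fun h => hx (e.injective h).symm
    rcases hne.lt_or_gt with h | h
    · have h' : ¬ e (J x) < e (J (J x)) := by rw [hJ]; exact not_lt.mpr h.le
      simp [hx, h, h']
    · have h1 : ¬ e x < e (J x) := not_lt.mpr h.le
      have h2 : e (J x) < e (J (J x)) := by rw [hJ]; exact h
      simp [hx, h1, h2, hf]

set_option maxHeartbeats 1000000 in
/-- For a nested family of sublevel sets with component sets `C n`
(in grading `2n`), `U` induced by inclusions and a compatible involution `J` with
at most one invariant component per level, the homology `ker(1+J)/im(1+J)` of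
`M = ⊕ₙ H⁰(Sₙ; F₂)` is, as a graded `F₂[U]`-module, a single tower with bottom
grading `2N` (one-dimensional in each grading `2n`, `n ≥ N`, with `U` acting by
isomorphisms above the bottom, and zero below `2N`). -/
theorem stmt_16 (C : ℕ → Type*) [∀ n, Fintype (C n)] [∀ n, DecidableEq (C n)]
    (ρ : ∀ n, C n → C (n + 1))
    (J : ∀ n, C n → C n)
    (hJ : ∀ n x, J n (J n x) = x)
    (hcomm : ∀ n x, ρ n (J n x) = J (n + 1) (ρ n x))
    (hone : ∀ n (x y : C n), J n x = x → J n y = y → x = y)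
    (hconn : ∃ N₀, ∀ n, N₀ ≤ n → (Nonempty (C n) ∧ ∀ x y : C n, x = y))
    (T : ∀ n, (C n → ZMod 2) →ₗ[ZMod 2] (C n → ZMod 2))
    (hT : ∀ n, T n = LinearMap.id + LinearMap.funLeft (ZMod 2) (ZMod 2) (J n))
    (U : ∀ n, (C (n + 1) → ZMod 2) →ₗ[ZMod 2] (C n → ZMod 2))
    (hU : ∀ n, U n = LinearMap.funLeft (ZMod 2) (ZMod 2) (ρ n))
    (N : ℕ) (hN : ∃ x : C N, J N x = x) (hNmin : ∀ m < N, ∀ x : C m, J m x ≠ x)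
    (Ubar : ∀ n, (↥(LinearMap.ker (T (n + 1))) ⧸
        (LinearMap.range (T (n + 1))).comap (LinearMap.ker (T (n + 1))).subtype)
      →ₗ[ZMod 2] (↥(LinearMap.ker (T n)) ⧸
        (LinearMap.range (T n)).comap (LinearMap.ker (T n)).subtype))
    (hUbar : ∀ (n) (f : ↥(LinearMap.ker (T (n + 1)))) (h : U n ↑f ∈ LinearMap.ker (T n)),
      Ubar n (Submodule.Quotient.mk f) =
        Submodule.Quotient.mk (⟨U n ↑f, h⟩ : ↥(LinearMap.ker (T n)))) :
    (∀ n < N, ∀ x : (↥(LinearMap.ker (T n)) ⧸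
        (LinearMap.range (T n)).comap (LinearMap.ker (T n)).subtype), x = 0) ∧
    (∀ n, N ≤ n → Module.finrank (ZMod 2) (↥(LinearMap.ker (T n)) ⧸
        (LinearMap.range (T n)).comap (LinearMap.ker (T n)).subtype) = 1) ∧
    (∀ n, N ≤ n → Function.Bijective (Ubar n)) := by
  classical
  -- application formula for T
  have hTapp : ∀ n (f : C n → ZMod 2) (x : C n), T n f x = f x + f (J n x) := by
    intro n f x
    rw [hT]
    simp [LinearMap.funLeft_apply]
  -- kernel description
  have hker : ∀ n (f : C n → ZMod 2), f ∈ LinearMap.ker (T n) ↔ ∀ x, f (J n x) = f x := by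
    intro n f
    rw [LinearMap.mem_ker]
    constructor
    · intro h x
      have := congrFun h x
      rw [hTapp] at this
      exact zmod2_add_eq_zero.mp this
    · intro h
      funext x
      rw [hTapp, h x]
      exact zmod2_add_self _
  -- fixed points exist for n ≥ N
  have hfix : ∀ n, N ≤ n → ∃ x : C n, J n x = x := by
    intro n hn
    induction n, hn using Nat.le_induction with
    | base => exact hN
    | succ n hn ih =>
      obtain ⟨x, hx⟩ := ih
      refine ⟨ρ n x, ?_⟩
      rw [← hcomm, hx]
  -- key: evaluation at fixed point induces a bijective map on homology
  have key : ∀ (n : ℕ) (x₀ : C n), J n x₀ = x₀ →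
      ∃ Φ : (↥(LinearMap.ker (T n)) ⧸
          (LinearMap.range (T n)).comap (LinearMap.ker (T n)).subtype) →ₗ[ZMod 2] ZMod 2,
        Function.Bijective Φ ∧
        ∀ f : ↥(LinearMap.ker (T n)),
          Φ (Submodule.Quotient.mk f) = (f : C n → ZMod 2) x₀ := by
    intro n x₀ hx₀
    set K := LinearMap.ker (T n)
    set R := (LinearMap.range (T n)).comap K.subtype
    let ev : ↥K →ₗ[ZMod 2] ZMod 2 :=
      (LinearMap.proj x₀ : ((_ : C n) → ZMod 2) →ₗ[ZMod 2] ZMod 2).comp K.subtype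
    have hev : R ≤ LinearMap.ker ev := by
      intro f hf
      obtain ⟨g, hg⟩ := hf
      have h1 : T n g x₀ = (f : C n → ZMod 2) x₀ := congrFun hg x₀
      rw [hTapp, hx₀] at h1
      rw [LinearMap.mem_ker]
      show (f : C n → ZMod 2) x₀ = 0
      rw [← h1]
      exact zmod2_add_self _
    refine ⟨R.liftQ ev hev, ⟨?_, ?_⟩, fun f => Submodule.liftQ_apply R ev (h := hev) f⟩
    · -- injective
      rw [← LinearMap.ker_eq_bot, LinearMap.ker_eq_bot']
      intro q hq
      obtain ⟨f, rfl⟩ := Submodule.Quotient.mk_surjective R q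
      have hfx₀ : (f : C n → ZMod 2) x₀ = 0 := by
        have := Submodule.liftQ_apply R ev (h := hev) f
        rw [hq] at this
        exact this.symm
      have hfinv : ∀ x, (f : C n → ZMod 2) (J n x) = (f : C n → ZMod 2) x :=
        (hker n f).mp f.2
      obtain ⟨g, hg⟩ := decomp_aux (J n) (hJ n) (f : C n → ZMod 2) hfinv
      rw [Submodule.Quotient.mk_eq_zero]
      refine ⟨g, ?_⟩
      show T n g = (f : C n → ZMod 2)
      funext x
      rw [hTapp, hg]
      by_cases hx : J n x = x
      · have hxx : x = x₀ := hone n x x₀ hx hx₀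
        rw [if_pos hx, hxx, hfx₀]
      · rw [if_neg hx]
    · -- surjective
      intro c
      rcases zmod2_cases c with rfl | rfl
      · exact ⟨0, map_zero _⟩
      · have hδker : (fun x => if x = x₀ then (1 : ZMod 2) else 0) ∈ K := by
          rw [hker]
          intro x
          by_cases hx : x = x₀
          · rw [hx, hx₀]
          · have : J n x ≠ x₀ := by
              intro h
              apply hx
              rw [← hJ n x, h, hx₀]
            simp [hx, this]
        refine ⟨Submodule.Quotient.mk ⟨_, hδker⟩, ?_⟩
        rw [Submodule.liftQ_apply]
        show (if x₀ = x₀ then (1 : ZMod 2) else 0) = 1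
        rw [if_pos rfl]
  refine ⟨?_, ?_, ?_⟩
  · -- zero below N
    intro n hn q
    obtain ⟨f, rfl⟩ := Submodule.Quotient.mk_surjective _ q
    have hfinv : ∀ x, (f : C n → ZMod 2) (J n x) = (f : C n → ZMod 2) x :=
      (hker n f).mp f.2
    obtain ⟨g, hg⟩ := decomp_aux (J n) (hJ n) (f : C n → ZMod 2) hfinv
    rw [Submodule.Quotient.mk_eq_zero]
    refine ⟨g, ?_⟩
    show T n g = (f : C n → ZMod 2)
    funext x
    rw [hTapp, hg, if_neg (hNmin n hn x)]
  · -- finrank 1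
    intro n hn
    obtain ⟨x₀, hx₀⟩ := hfix n hn
    obtain ⟨Φ, hΦbij, -⟩ := key n x₀ hx₀
    rw [(LinearEquiv.ofBijective Φ hΦbij).finrank_eq]
    exact Module.finrank_self (ZMod 2)
  · -- Ubar bijective
    intro n hn
    obtain ⟨x₀, hx₀⟩ := hfix n hn
    have hx₁ : J (n + 1) (ρ n x₀) = ρ n x₀ := by rw [← hcomm, hx₀]
    obtain ⟨Φ₀, hΦ₀bij, hΦ₀⟩ := key n x₀ hx₀
    obtain ⟨Φ₁, hΦ₁bij, hΦ₁⟩ := key (n + 1) (ρ n x₀) hx₁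
    have hcompat : ∀ q, Φ₀ (Ubar n q) = Φ₁ q := by
      intro q
      obtain ⟨f, rfl⟩ := Submodule.Quotient.mk_surjective _ q
      have hfinv : ∀ x, (f : C (n + 1) → ZMod 2) (J (n + 1) x) = (f : C (n + 1) → ZMod 2) x :=
        (hker (n + 1) f).mp f.2
      have hUf : U n ↑f ∈ LinearMap.ker (T n) := by
        rw [hker]
        intro x
        rw [hU]
        simp only [LinearMap.funLeft_apply, Function.comp_apply]
        rw [hcomm, hfinv]
      rw [hUbar n f hUf, hΦ₀, hΦ₁]
      show (U n ↑f) x₀ = (f : C (n + 1) → ZMod 2) (ρ n x₀)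
      rw [hU]
      simp [LinearMap.funLeft_apply]
    constructor
    · intro a b hab
      apply hΦ₁bij.injective
      rw [← hcompat, ← hcompat, hab]
    · intro y
      obtain ⟨a, ha⟩ := hΦ₁bij.surjective (Φ₀ y)
      refine ⟨a, hΦ₀bij.injective ?_⟩
      rw [hcompat, ha]
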